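/- The rank vectors R₁, R₂, …, R_T are mutually independent, and each R_t is uniformly distributed over the K! permutations of {1,…,K}. -/

import Mathlib

open MeasureTheory ProbabilityTheory Matrix
open scoped ENNReal NNReal

universe u v

/-- The rank vector of a tuple of reals: `rankVec r k = #{j : r j ≤ r k}`.
When the entries are pairwise distinct this is a permutation of `{1, …, N}`. -/
noncomputable def rankVec {N : ℕ} (r : Fin N → ℝ) : Fin N → ℕ :=
  fun k => (Finset.univ.filter fun j => r j ≤ r k).card

/-- The residual `‖Δ − B(BᵀΔ)‖₂` of a vector `Δ ∈ ℝ^p` with respect to the column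
space of the `p × q` matrix `B`, in the Euclidean (ℓ²) norm. -/
noncomputable def resid {p q : ℕ} (B : Matrix (Fin p) (Fin q) ℝ)
    (Δ : EuclideanSpace ℝ (Fin p)) : ℝ :=
  ‖Δ - (WithLp.equiv 2 (Fin p → ℝ)).symm
      (B.mulVec (Bᵀ.mulVec (WithLp.equiv 2 (Fin p → ℝ) Δ)))‖

/-! ### Auxiliary material on rank vectors -/

/-- A permutation shifted by one, as a map `Fin K → ℕ`. -/
def shiftP {K : ℕ} (σ : Equiv.Perm (Fin K)) : Fin K → ℕ := fun k => (σ k : ℕ) + 1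

lemma shiftP_injective {K : ℕ} : Function.Injective (shiftP (K := K)) := by
  intro σ τ h
  ext k
  have := congrFun h k
  simpa [shiftP] using this

lemma rankVec_comp_perm {K : ℕ} (r : Fin K → ℝ) (π : Equiv.Perm (Fin K)) (k : Fin K) :
    rankVec (fun j => r (π j)) k = rankVec r (π k) := by
  unfold rankVec
  exact Finset.card_bij' (fun j _ => π j) (fun j _ => π.symm j)
    (by simp) (by simp) (by simp) (by simp)

lemma one_le_rankVec {K : ℕ} (r : Fin K → ℝ) (k : Fin K) : 1 ≤ rankVec r k := by
  have : k ∈ Finset.univ.filter fun j => r j ≤ r k := by simp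
  exact Finset.card_pos.2 ⟨k, this⟩

lemma rankVec_le {K : ℕ} (r : Fin K → ℝ) (k : Fin K) : rankVec r k ≤ K := by
  simpa [rankVec] using Finset.card_filter_le Finset.univ fun j => r j ≤ r k

lemma rankVec_injective {K : ℕ} {r : Fin K → ℝ} (hr : Function.Injective r) :
    Function.Injective (rankVec r) := by
  have mono : ∀ {a b : Fin K}, r a < r b → rankVec r a < rankVec r b := by
    intro a b hab
    apply Finset.card_lt_card
    constructor
    · intro j hj
      simp only [Finset.mem_filter, Finset.mem_univ, true_and] at hj ⊢
      exact hj.trans hab.le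
    · intro hsub
      have hb : b ∈ Finset.univ.filter fun j => r j ≤ r b := by simp
      have := hsub hb
      simp only [Finset.mem_filter, Finset.mem_univ, true_and] at this
      exact absurd this (not_le.2 hab)
  intro a b h
  rcases lt_trichotomy (r a) (r b) with h1 | h1 | h1
  · exact absurd h (mono h1).ne
  · exact hr h1
  · exact absurd h.symm (mono h1).ne

lemma exists_perm_rankVec {K : ℕ} {r : Fin K → ℝ} (hr : Function.Injective r) :
    ∃ τ : Equiv.Perm (Fin K), ∀ k, rankVec r k = shiftP τ k := by
  have h1 : ∀ k, 1 ≤ rankVec r k := one_le_rankVec r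
  have h2 : ∀ k, rankVec r k ≤ K := rankVec_le r
  let g : Fin K → Fin K := fun k => ⟨rankVec r k - 1, by have := h1 k; have := h2 k; omega⟩
  have hg : Function.Injective g := by
    intro a b hab
    apply rankVec_injective hr
    have hval : rankVec r a - 1 = rankVec r b - 1 := congrArg Fin.val hab
    have := h1 a; have := h1 b; omega
  let τ := Equiv.ofBijective g (Finite.injective_iff_bijective.1 hg)
  refine ⟨τ, fun k => ?_⟩
  have hτ : (τ k : ℕ) = rankVec r k - 1 := rfl
  have := h1 k
  simp only [shiftP]
  omega

lemma measurable_rankVec {K : ℕ} : Measurable (rankVec (N := K)) := by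
  apply measurable_pi_lambda
  intro k
  have : (fun r : Fin K → ℝ => rankVec r k)
      = fun r => ∑ j : Fin K, if r j ≤ r k then 1 else 0 := by
    funext r; rw [rankVec, Finset.card_filter]
  rw [this]
  exact Finset.measurable_sum _ fun j _ =>
    Measurable.ite (measurableSet_le (measurable_pi_apply j) (measurable_pi_apply k))
      measurable_const measurable_const

lemma continuous_resid {p q : ℕ} (B : Matrix (Fin p) (Fin q) ℝ) : Continuous (resid B) := by
  unfold resid
  apply Continuous.norm
  apply Continuous.sub continuous_id
  apply (PiLp.continuous_toLp 2 (fun _ : Fin p => ℝ)).comp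
  have hmv : ∀ {m n : ℕ} (M : Matrix (Fin m) (Fin n) ℝ),
      Continuous fun v : Fin n → ℝ => M.mulVec v := by
    intro m n M
    apply continuous_pi
    intro i
    simp only [Matrix.mulVec, dotProduct]
    exact continuous_finset_sum _ fun j _ => continuous_const.mul (continuous_apply j)
  exact ((hmv B).comp (hmv Bᵀ)).comp (PiLp.continuous_ofLp 2 (fun _ : Fin p => ℝ))

lemma measurable_resid {p q : ℕ} (B : Matrix (Fin p) (Fin q) ℝ) : Measurable (resid B) :=
  (continuous_resid B).measurable

/-! ### Auxiliary material on independent families -/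

lemma iIndep_precomp {Ω ι κ : Type*} {mΩ : MeasurableSpace Ω} {μ : Measure Ω}
    {m : ι → MeasurableSpace Ω} (h : iIndep m μ) {e : κ → ι} (he : Function.Injective e) :
    iIndep (fun k => m (e k)) μ := by
  classical
  rw [iIndep_iff] at h ⊢
  intro s f' hf'
  set g : ι → Set Ω := fun i => if hi : ∃ j ∈ s, e j = i then f' hi.choose else Set.univ with hgdef
  have hge : ∀ j ∈ s, g (e j) = f' j := by
    intro j hj
    have hex : ∃ j' ∈ s, e j' = e j := ⟨j, hj, rfl⟩
    have hspec := hex.choose_spec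
    have hcj : hex.choose = j := he hspec.2
    simp only [g, dif_pos hex, hcj]
  have hmeas : ∀ i ∈ s.image e, MeasurableSet[m i] (g i) := by
    intro i hi
    rcases Finset.mem_image.1 hi with ⟨j, hj, rfl⟩
    rw [hge j hj]
    exact hf' j hj
  have key := h (s.image e) hmeas
  have h1 : ⋂ i ∈ s.image e, g i = ⋂ j ∈ s, f' j := by
    ext x
    simp only [Set.mem_iInter, Finset.mem_image]
    constructor
    · intro hx j hj; rw [← hge j hj]; exact hx _ ⟨j, hj, rfl⟩
    · rintro hx i ⟨j, hj, rfl⟩; rw [hge j hj]; exact hx j hj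
  have h2 : ∏ i ∈ s.image e, μ (g i) = ∏ j ∈ s, μ (f' j) := by
    rw [Finset.prod_image (fun a _ b _ hab => he hab)]
    exact Finset.prod_congr rfl fun j hj => by rw [hge j hj]
  rw [h1, h2] at key
  exact key

lemma comap_up_eq {α : Type v} (m : MeasurableSpace α) :
    MeasurableSpace.comap (ULift.up.{u}) (ULift.instMeasurableSpace) = m := by
  refine le_antisymm MeasurableSpace.comap_map_le ?_
  intro t ht
  exact ⟨ULift.down ⁻¹' t, ht, rfl⟩

lemma comap_up_comp {Ω : Type*} {α : Type v} (m : MeasurableSpace α) (f : Ω → α) :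
    MeasurableSpace.comap (fun ω => ULift.up.{u} (f ω)) ULift.instMeasurableSpace
      = MeasurableSpace.comap f m := by
  rw [show (fun ω => ULift.up.{u} (f ω)) = ULift.up ∘ f from rfl,
    ← MeasurableSpace.comap_comp, comap_up_eq]

/-! ### The state space of the whole experiment -/

/-- Index family of types: the initial parameter together with all the data. -/
noncomputable def OFam (T K p : ℕ) (𝓧 : Type u) : Option (Fin T × Fin K) → Type u
  | none => ULift.{u} (EuclideanSpace ℝ (Fin p))
  | some _ => 𝓧

noncomputable instance OFam.measurableSpace (T K p : ℕ) (𝓧 : Type u) [MeasurableSpace 𝓧] :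
    ∀ o, MeasurableSpace (OFam T K p 𝓧 o)
  | none => ULift.instMeasurableSpace
  | some _ => (inferInstance : MeasurableSpace 𝓧)

/-- The combined family of random elements. -/
def OF {Ω : Type*} {𝓧 : Type u} {T K p : ℕ} (w0 : Ω → EuclideanSpace ℝ (Fin p))
    (D : Fin T → Fin K → Ω → 𝓧) : ∀ o, Ω → OFam T K p 𝓧 o
  | none => fun ω => ULift.up (w0 ω)
  | some tk => D tk.1 tk.2

/-- The deterministic recursion computing `w_t` from the initial value and the data. -/
noncomputable def phiAux {𝓧 : Type*} (T K p : ℕ)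
    (F : EuclideanSpace ℝ (Fin p) → 𝓧 → EuclideanSpace ℝ (Fin p))
    (x : EuclideanSpace ℝ (Fin p) × (Fin T × Fin K → 𝓧)) : ℕ → EuclideanSpace ℝ (Fin p) :=
  fun n => Nat.rec x.1
    (fun t prev => if h : t < T then (K : ℝ)⁻¹ • ∑ k : Fin K, F prev (x.2 (⟨t, h⟩, k)) else prev) n

lemma measurable_phiAux {𝓧 : Type*} [MeasurableSpace 𝓧] (T K p : ℕ)
    (F : EuclideanSpace ℝ (Fin p) → 𝓧 → EuclideanSpace ℝ (Fin p))
    (hF : Measurable (Function.uncurry F)) (n : ℕ) :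
    Measurable (fun x : EuclideanSpace ℝ (Fin p) × (Fin T × Fin K → 𝓧) => phiAux T K p F x n) := by
  induction n with
  | zero => exact measurable_fst
  | succ n ih =>
    show Measurable fun x => if h : n < T then
      (K : ℝ)⁻¹ • ∑ k : Fin K, F (phiAux T K p F x n) (x.2 (⟨n, h⟩, k)) else phiAux T K p F x n
    by_cases h : n < T
    · simp only [dif_pos h]
      apply Measurable.fun_const_smul
      apply Finset.measurable_sum
      intro k _
      exact hF.comp (ih.prodMk ((measurable_pi_apply _).comp measurable_snd))
    · simpa only [dif_neg h] using ih

/-- The rank vectors `R₁,…,R_T` of the residuals are mutually independent, and each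
`R_t` is uniformly distributed over the `K!` permutations of `{1,…,K}`. -/
theorem rank_vectors_iid_uniform
    {Ω : Type*} [MeasurableSpace Ω] (P : Measure Ω) [IsProbabilityMeasure P]
    {𝓧 : Type*} [MeasurableSpace 𝓧]
    (T K p q : ℕ) (hK : 1 ≤ K) (hp : 1 ≤ p)
    (D : Fin T → Fin K → Ω → 𝓧) (hD : ∀ t k, Measurable (D t k))
    (w : ℕ → Ω → EuclideanSpace ℝ (Fin p)) (hw0 : Measurable (w 0))
    (F : EuclideanSpace ℝ (Fin p) → 𝓧 → EuclideanSpace ℝ (Fin p))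
    (hF : Measurable (Function.uncurry F))
    -- the recursion w_{t+1} = (1/K) Σ_k F(w_t, D_{t,k})
    (hrec : ∀ t : Fin T, w (t.val + 1)
      = fun ω => (K : ℝ)⁻¹ • ∑ k : Fin K, F (w t.val ω) (D t k ω))
    -- the family {D_{t,k}} together with w₁ is an independent family
    (hIndep : iIndep (fun i : Option (Fin T × Fin K) =>
      i.elim (MeasurableSpace.comap (w 0) inferInstance)
        fun tk => MeasurableSpace.comap (D tk.1 tk.2) inferInstance) P)
    -- the D_{t,k} are identically distributed
    (hId : ∀ (t t' : Fin T) (k k' : Fin K), IdentDistrib (D t k) (D t' k') P P)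
    (B : Matrix (Fin p) (Fin q) ℝ)
    -- almost surely, for every t, the residuals r_t^(1),…,r_t^(K) are pairwise distinct
    (hdist : ∀ᵐ ω ∂P, ∀ t : Fin T,
      Function.Injective fun k : Fin K => resid B (F (w t.val ω) (D t k ω) - w t.val ω)) :
    iIndepFun
        (fun t ω => rankVec fun k => resid B (F (w t.val ω) (D t k ω) - w t.val ω)) P
    ∧ ∀ (t : Fin T) (σ : Equiv.Perm (Fin K)),
        P {ω | ∀ k, rankVec (fun j => resid B (F (w t.val ω) (D t j ω) - w t.val ω)) k
            = (σ k : ℕ) + 1}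
          = (K.factorial : ℝ≥0∞)⁻¹ := by
  classical
  -- the combined random state
  set Y : Ω → EuclideanSpace ℝ (Fin p) × (Fin T × Fin K → 𝓧) :=
    fun ω => (w 0 ω, fun tk => D tk.1 tk.2 ω) with hYdef
  have hY : Measurable Y := hw0.prodMk (measurable_pi_lambda _ fun tk => hD tk.1 tk.2)
  -- the rank statistics as functions of the combined state
  set Rt : Fin T → EuclideanSpace ℝ (Fin p) × (Fin T × Fin K → 𝓧) → (Fin K → ℕ) :=
    fun t x => rankVec fun k =>
      resid B (F (phiAux T K p F x t.val) (x.2 (t, k)) - phiAux T K p F x t.val) with hRtdef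
  have hRt : ∀ t : Fin T, Measurable (Rt t) := by
    intro t
    apply measurable_rankVec.comp
    apply measurable_pi_lambda
    intro k
    exact (measurable_resid B).comp
      ((hF.comp ((measurable_phiAux T K p F hF t.val).prodMk
        ((measurable_pi_apply (t, k)).comp measurable_snd))).sub
        (measurable_phiAux T K p F hF t.val))
  -- identification of the recursion
  have hwt : ∀ n, n ≤ T → ∀ ω, w n ω = phiAux T K p F (Y ω) n := by
    intro n
    induction n with
    | zero => intro _ ω; rfl
    | succ n ih =>
      intro hn ω
      have hnT : n < T := by omega
      have hr := congrFun (hrec ⟨n, hnT⟩) ω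
      rw [hr]
      show _ = phiAux T K p F (Y ω) (n + 1)
      rw [show phiAux T K p F (Y ω) (n + 1)
        = if h : n < T then (K : ℝ)⁻¹ • ∑ k : Fin K,
            F (phiAux T K p F (Y ω) n) ((Y ω).2 (⟨n, h⟩, k))
          else phiAux T K p F (Y ω) n from rfl, dif_pos hnT]
      rw [ih (le_of_lt hnT) ω]
  have hRR : ∀ (t : Fin T) (ω : Ω),
      (rankVec fun k => resid B (F (w t.val ω) (D t k ω) - w t.val ω)) = Rt t (Y ω) := by
    intro t ω
    rw [hwt t.val t.isLt.le ω]
  -- law invariance under permuting each time block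
  have hmapY : ∀ σf : Fin T → Equiv.Perm (Fin K),
      Measure.map (fun ω => (w 0 ω, fun tk : Fin T × Fin K => D tk.1 (σf tk.1 tk.2) ω)) P
        = Measure.map Y P := by
    intro σf
    -- the tuple law of any independent version is the product measure
    have tuple_law : ∀ (Dm : Fin T → Fin K → Ω → 𝓧), (∀ t k, Measurable (Dm t k)) →
        iIndep (fun o => MeasurableSpace.comap (OF (w 0) Dm o) (OFam.measurableSpace T K p 𝓧 o)) P →
        Measure.map (fun ω o => OF (w 0) Dm o ω) P
          = Measure.pi (fun o => Measure.map (OF (w 0) Dm o) P) := by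
      intro Dm hDm hInd
      have hOFm : ∀ o, Measurable (OF (w 0) Dm o) := by
        intro o
        cases o with
        | none => exact measurable_up.comp hw0
        | some tk => exact hDm tk.1 tk.2
      have htuple : Measurable (fun ω o => OF (w 0) Dm o ω) := measurable_pi_lambda _ hOFm
      haveI : ∀ o, IsProbabilityMeasure (Measure.map (OF (w 0) Dm o) P) :=
        fun o => Measure.isProbabilityMeasure_map (hOFm o).aemeasurable
      symm
      apply Measure.pi_eq
      intro s hs
      rw [Measure.map_apply htuple (MeasurableSet.univ_pi hs)]
      have hpre : (fun ω o => OF (w 0) Dm o ω) ⁻¹' (Set.pi Set.univ s)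
          = ⋂ o, OF (w 0) Dm o ⁻¹' s o := by
        ext ω; simp [Set.mem_pi]
      rw [hpre, hInd.meas_iInter (fun o => ⟨s o, hs o, rfl⟩)]
      exact Finset.prod_congr rfl fun o _ => (Measure.map_apply (hOFm o) (hs o)).symm
    have hIndep0 : iIndep
        (fun o => MeasurableSpace.comap (OF (w 0) D o) (OFam.measurableSpace T K p 𝓧 o)) P := by
      have hfam : (fun o : Option (Fin T × Fin K) =>
            MeasurableSpace.comap (OF (w 0) D o) (OFam.measurableSpace T K p 𝓧 o))
          = fun i => i.elim (MeasurableSpace.comap (w 0) inferInstance)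
              fun tk => MeasurableSpace.comap (D tk.1 tk.2) inferInstance := by
        funext o
        cases o with
        | none => exact comap_up_comp _ _
        | some tk => rfl
      rw [hfam]
      exact hIndep
    have hIndepσ : iIndep
        (fun o => MeasurableSpace.comap (OF (w 0) (fun t k => D t (σf t k)) o)
          (OFam.measurableSpace T K p 𝓧 o)) P := by
      have he : Function.Injective fun tk : Fin T × Fin K => (tk.1, σf tk.1 tk.2) := by
        rintro ⟨t1, k1⟩ ⟨t2, k2⟩ hab
        have h1 : t1 = t2 := congrArg Prod.fst hab
        subst h1
        have h2 : σf t1 k1 = σf t1 k2 := congrArg Prod.snd hab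
        exact Prod.ext rfl ((σf t1).injective h2)
      have heo : Function.Injective
          (Option.map fun tk : Fin T × Fin K => (tk.1, σf tk.1 tk.2)) :=
        Option.map_injective he
      have h := iIndep_precomp hIndep0 heo
      have hfam : (fun o => MeasurableSpace.comap
            (OF (w 0) D (Option.map (fun tk : Fin T × Fin K => (tk.1, σf tk.1 tk.2)) o))
            (OFam.measurableSpace T K p 𝓧
              (Option.map (fun tk : Fin T × Fin K => (tk.1, σf tk.1 tk.2)) o)))
          = fun o => MeasurableSpace.comap (OF (w 0) (fun t k => D t (σf t k)) o)
              (OFam.measurableSpace T K p 𝓧 o) := by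
        funext o
        cases o with
        | none => rfl
        | some tk => rfl
      rw [hfam] at h
      exact h
    have hDσ : ∀ t k, Measurable ((fun t k => D t (σf t k)) t k) := fun t k => hD t (σf t k)
    -- the projection to the pair (initial value, data)
    set πm : (∀ o, OFam T K p 𝓧 o) → EuclideanSpace ℝ (Fin p) × (Fin T × Fin K → 𝓧) :=
      fun g => ((g none).down, fun tk => g (some tk)) with hπdef
    have hπm : Measurable πm := by
      apply Measurable.prodMk
      · exact measurable_down.comp (measurable_pi_apply none)
      · exact measurable_pi_lambda _ fun tk => measurable_pi_apply (some tk)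
    have htupleD : Measurable (fun ω o => OF (w 0) D o ω) := by
      apply measurable_pi_lambda
      intro o
      cases o with
      | none => exact measurable_up.comp hw0
      | some tk => exact hD tk.1 tk.2
    have htupleDσ : Measurable (fun ω o => OF (w 0) (fun t k => D t (σf t k)) o ω) := by
      apply measurable_pi_lambda
      intro o
      cases o with
      | none => exact measurable_up.comp hw0
      | some tk => exact hD tk.1 (σf tk.1 tk.2)
    have hY1 : Y = πm ∘ (fun ω o => OF (w 0) D o ω) := rfl
    have hY2 : (fun ω => (w 0 ω, fun tk : Fin T × Fin K => D tk.1 (σf tk.1 tk.2) ω))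
        = πm ∘ (fun ω o => OF (w 0) (fun t k => D t (σf t k)) o ω) := rfl
    rw [hY1, hY2, ← Measure.map_map hπm htupleD, ← Measure.map_map hπm htupleDσ]
    congr 1
    rw [tuple_law D hD hIndep0, tuple_law (fun t k => D t (σf t k)) hDσ hIndepσ]
    congr 1
    funext o
    cases o with
    | none => rfl
    | some tk => exact (hId tk.1 tk.1 (σf tk.1 tk.2) tk.2).map_eq
  -- the elementary rank events
  set SS : (Fin T → Equiv.Perm (Fin K)) → Set (EuclideanSpace ℝ (Fin p) × (Fin T × Fin K → 𝓧)) :=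
    fun hh => {x | ∀ t, Rt t x = shiftP (hh t)} with hSSdef
  have hSSm : ∀ hh, MeasurableSet (SS hh) := by
    intro hh
    have : SS hh = ⋂ t, Rt t ⁻¹' {shiftP (hh t)} := by
      ext x; simp [SS, Set.mem_iInter]
    rw [this]
    exact MeasurableSet.iInter fun t => (hRt t) (measurableSet_singleton _)
  -- rank of permuted residuals
  have hperm : ∀ (σf : Fin T → Equiv.Perm (Fin K)) (ω : Ω) (t : Fin T),
      Rt t ((w 0 ω, fun tk : Fin T × Fin K => D tk.1 (σf tk.1 tk.2) ω))
        = fun k => Rt t (Y ω) (σf t k) := by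
    intro σf ω t
    have hphi : ∀ n, phiAux T K p F ((w 0 ω, fun tk : Fin T × Fin K => D tk.1 (σf tk.1 tk.2) ω)) n
        = phiAux T K p F (Y ω) n := by
      intro n
      induction n with
      | zero => rfl
      | succ n ih =>
        have estep : ∀ x : EuclideanSpace ℝ (Fin p) × (Fin T × Fin K → 𝓧),
            phiAux T K p F x (n + 1) = if h : n < T then
              (K : ℝ)⁻¹ • ∑ k : Fin K, F (phiAux T K p F x n) (x.2 (⟨n, h⟩, k))
            else phiAux T K p F x n := fun _ => rfl
        rw [estep ((w 0 ω, fun tk : Fin T × Fin K => D tk.1 (σf tk.1 tk.2) ω)),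
          estep (Y ω)]
        by_cases h : n < T
        · rw [dif_pos h, dif_pos h, ih]
          congr 1
          exact Equiv.sum_comp (σf ⟨n, h⟩)
            (fun k => F (phiAux T K p F (Y ω) n) (D ⟨n, h⟩ k ω))
        · rw [dif_neg h, dif_neg h]
          exact ih
    funext k
    show rankVec (fun j => resid B
        (F (phiAux T K p F ((w 0 ω, fun tk : Fin T × Fin K => D tk.1 (σf tk.1 tk.2) ω)) t.val)
          (D t (σf t j) ω)
          - phiAux T K p F ((w 0 ω, fun tk : Fin T × Fin K => D tk.1 (σf tk.1 tk.2) ω)) t.val)) k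
      = _
    rw [hphi]
    exact rankVec_comp_perm
      (fun j => resid B (F (phiAux T K p F (Y ω) t.val) (D t j ω) - phiAux T K p F (Y ω) t.val))
      (σf t) k
  -- pulling back an elementary event along a permuted state
  have hpre : ∀ (hh σf : Fin T → Equiv.Perm (Fin K)),
      (fun ω => (w 0 ω, fun tk : Fin T × Fin K => D tk.1 (σf tk.1 tk.2) ω)) ⁻¹' SS hh
        = Y ⁻¹' SS (fun t => hh t * (σf t)⁻¹) := by
    intro hh σf
    ext ω
    simp only [Set.mem_preimage, SS, Set.mem_setOf_eq]
    constructor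
    · intro H t
      funext k
      have h1 := congrFun ((hperm σf ω t).symm.trans (H t)) ((σf t)⁻¹ k)
      simp only [Equiv.Perm.coe_inv, Equiv.apply_symm_apply] at h1
      rw [h1]
      simp [shiftP, Equiv.Perm.mul_apply]
    · intro H t
      rw [hperm σf ω t]
      funext k
      have h1 := congrFun (H t) (σf t k)
      rw [h1]
      simp [shiftP, Equiv.Perm.mul_apply]
  -- all elementary rank events have the same probability
  have hAconst : ∀ hh, P (Y ⁻¹' SS hh) = P (Y ⁻¹' SS fun _ => 1) := by
    intro hh
    have hYσ : Measurable (fun ω => (w 0 ω, fun tk : Fin T × Fin K => D tk.1 (hh tk.1 tk.2) ω)) :=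
      hw0.prodMk (measurable_pi_lambda _ fun tk => hD tk.1 (hh tk.1 tk.2))
    have h1 : P (Y ⁻¹' SS hh)
        = P ((fun ω => (w 0 ω, fun tk : Fin T × Fin K => D tk.1 (hh tk.1 tk.2) ω)) ⁻¹' SS hh) := by
      rw [← Measure.map_apply hY (hSSm hh), ← Measure.map_apply hYσ (hSSm hh), hmapY hh]
    rw [h1, hpre hh hh]
    congr 1
    have : (fun t => hh t * (hh t)⁻¹) = fun _ : Fin T => (1 : Equiv.Perm (Fin K)) := by
      funext t; group
    rw [this]
  set c : ℝ≥0∞ := P (Y ⁻¹' SS fun _ => 1) with hcdef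
  -- the partition computation
  have key : ∀ (S : Finset (Fin T)) (Es : Fin T → Set (Fin K → ℕ)),
      P (⋂ t ∈ S, (fun ω => Rt t (Y ω)) ⁻¹' Es t)
        = ((Fintype.piFinset fun t => if t ∈ S
            then Finset.univ.filter fun σ : Equiv.Perm (Fin K) => shiftP σ ∈ Es t
            else Finset.univ).card : ℝ≥0∞) * c := by
    intro S Es
    set HS := Fintype.piFinset fun t => if t ∈ S
      then Finset.univ.filter fun σ : Equiv.Perm (Fin K) => shiftP σ ∈ Es t
      else (Finset.univ : Finset (Equiv.Perm (Fin K))) with hHSdef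
    have hae : (⋂ t ∈ S, (fun ω => Rt t (Y ω)) ⁻¹' Es t) =ᵐ[P] ⋃ hh ∈ HS, Y ⁻¹' SS hh := by
      rw [Filter.eventuallyEq_set]
      filter_upwards [hdist] with ω hω
      have hexτ : ∀ t : Fin T, ∃ τ : Equiv.Perm (Fin K), Rt t (Y ω) = shiftP τ := by
        intro t
        obtain ⟨τ, hτ⟩ := exists_perm_rankVec (hω t)
        refine ⟨τ, ?_⟩
        rw [← hRR t ω]
        exact funext hτ
      constructor
      · intro hmem
        choose τ hτ using hexτ
        simp only [Set.mem_iInter, Set.mem_preimage] at hmem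
        have h1 : τ ∈ HS := by
          rw [Fintype.mem_piFinset]
          intro t
          by_cases ht : t ∈ S
          · simp only [if_pos ht, Finset.mem_filter, Finset.mem_univ, true_and]
            rw [← hτ t]
            exact hmem t ht
          · simp [if_neg ht]
        have h2 : ω ∈ Y ⁻¹' SS τ := fun t => hτ t
        exact Set.mem_biUnion h1 h2
      · intro hmem
        rcases Set.mem_iUnion₂.1 hmem with ⟨hh, hhHS, hωA⟩
        simp only [Set.mem_iInter, Set.mem_preimage]
        intro t ht
        have h1 : Rt t (Y ω) = shiftP (hh t) := hωA t
        have h2 : shiftP (hh t) ∈ Es t := by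
          have := Fintype.mem_piFinset.1 hhHS t
          rw [if_pos ht] at this
          simpa using this
        rw [h1]
        exact h2
    rw [measure_congr hae]
    rw [measure_biUnion_finset ?_ (fun hh _ => hY (hSSm hh))]
    · rw [Finset.sum_congr rfl fun hh _ => hAconst hh, Finset.sum_const, nsmul_eq_mul]
    · intro h1 h1m h2 h2m hne
      simp only [Function.onFun]
      rw [Set.disjoint_left]
      intro ω hω1 hω2
      apply hne
      funext t
      exact shiftP_injective ((hω1 t).symm.trans (hω2 t))
  -- the normalization
  have hfact0 : ((K.factorial : ℝ≥0∞)) ≠ 0 := Nat.cast_ne_zero.2 K.factorial_pos.ne'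
  have hfactT : ((K.factorial : ℝ≥0∞)) ≠ ⊤ := ENNReal.natCast_ne_top _
  have hc : ((K.factorial : ℝ≥0∞)) ^ T * c = 1 := by
    have h0 := key ∅ fun _ => Set.univ
    have hbi : (⋂ t ∈ (∅ : Finset (Fin T)), (fun ω => Rt t (Y ω)) ⁻¹' Set.univ) = Set.univ := by
      simp
    rw [hbi, measure_univ] at h0
    rw [Fintype.card_piFinset] at h0
    simp only [Finset.notMem_empty, if_false, Finset.card_univ, Fintype.card_perm,
      Fintype.card_fin, Finset.prod_const, Nat.cast_pow] at h0
    exact h0.symm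
  have hcval : c = (((K.factorial : ℝ≥0∞)) ^ T)⁻¹ := by
    have hne : ((K.factorial : ℝ≥0∞)) ^ T ≠ 0 := pow_ne_zero _ hfact0
    have hnt : ((K.factorial : ℝ≥0∞)) ^ T ≠ ⊤ := ENNReal.pow_ne_top hfactT
    calc c = (((K.factorial : ℝ≥0∞)) ^ T)⁻¹ * (((K.factorial : ℝ≥0∞)) ^ T * c) := by
          rw [← mul_assoc, ENNReal.inv_mul_cancel hne hnt, one_mul]
      _ = (((K.factorial : ℝ≥0∞)) ^ T)⁻¹ := by rw [hc, mul_one]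
  -- master formula
  have master : ∀ (S : Finset (Fin T)) (Es : Fin T → Set (Fin K → ℕ)),
      P (⋂ t ∈ S, (fun ω => Rt t (Y ω)) ⁻¹' Es t)
        = ∏ t ∈ S, (((Finset.univ.filter
            fun σ : Equiv.Perm (Fin K) => shiftP σ ∈ Es t).card : ℝ≥0∞)
            * (K.factorial : ℝ≥0∞)⁻¹) := by
    intro S Es
    rw [key S Es, hcval, Fintype.card_piFinset, Nat.cast_prod]
    have hfT : ((((K.factorial : ℝ≥0∞)) ^ T)⁻¹ : ℝ≥0∞)
        = ∏ _t : Fin T, (K.factorial : ℝ≥0∞)⁻¹ := by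
      rw [Finset.prod_const, Finset.card_univ, Fintype.card_fin, ← ENNReal.inv_pow]
    rw [hfT, ← Finset.prod_mul_distrib]
    rw [← Finset.prod_mul_prod_compl S (fun t =>
      (((if t ∈ S then Finset.univ.filter fun σ : Equiv.Perm (Fin K) => shiftP σ ∈ Es t
        else Finset.univ).card : ℝ≥0∞)) * (K.factorial : ℝ≥0∞)⁻¹)]
    have h2 : (∏ t ∈ Sᶜ, (((if t ∈ S then Finset.univ.filter
          fun σ : Equiv.Perm (Fin K) => shiftP σ ∈ Es t
          else Finset.univ).card : ℝ≥0∞)) * (K.factorial : ℝ≥0∞)⁻¹) = 1 := by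
      apply Finset.prod_eq_one
      intro t ht
      rw [if_neg (Finset.mem_compl.1 ht)]
      rw [Finset.card_univ, Fintype.card_perm, Fintype.card_fin]
      exact ENNReal.mul_inv_cancel hfact0 hfactT
    rw [h2, mul_one]
    exact Finset.prod_congr rfl fun t ht => by rw [if_pos ht]
  constructor
  · rw [iIndepFun_iff_measure_inter_preimage_eq_mul]
    intro S sets _
    have hconv : ∀ (t : Fin T) (E0 : Set (Fin K → ℕ)),
        ((fun (t : Fin T) ω =>
          rankVec fun k => resid B (F (w t.val ω) (D t k ω) - w t.val ω)) t) ⁻¹' E0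
          = (fun ω => Rt t (Y ω)) ⁻¹' E0 := by
      intro t E0
      ext ω
      simp only [Set.mem_preimage]
      rw [hRR t ω]
    have hL : (⋂ t ∈ S, ((fun (t : Fin T) ω =>
          rankVec fun k => resid B (F (w t.val ω) (D t k ω) - w t.val ω)) t) ⁻¹' sets t)
        = ⋂ t ∈ S, (fun ω => Rt t (Y ω)) ⁻¹' sets t := by
      exact Set.iInter₂_congr fun t _ => hconv t (sets t)
    rw [hL, master S sets]
    refine Finset.prod_congr rfl fun t ht => ?_
    rw [hconv t (sets t)]
    have hm := master {t} sets
    have hbi : (⋂ t' ∈ ({t} : Finset (Fin T)), (fun ω => Rt t' (Y ω)) ⁻¹' sets t')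
        = (fun ω => Rt t (Y ω)) ⁻¹' sets t := by
      simp
    rw [hbi, Finset.prod_singleton] at hm
    exact hm.symm
  · intro t σ
    have hset : {ω | ∀ k, rankVec (fun j => resid B (F (w t.val ω) (D t j ω) - w t.val ω)) k
          = (σ k : ℕ) + 1}
        = (fun ω => Rt t (Y ω)) ⁻¹' {g : Fin K → ℕ | ∀ k, g k = (σ k : ℕ) + 1} := by
      ext ω
      simp only [Set.mem_setOf_eq, Set.mem_preimage]
      constructor <;> intro hk k
      · rw [← hRR t ω]; exact hk k
      · rw [hRR t ω]; exact hk k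
    rw [hset]
    have hm := master {t} (fun _ => {g : Fin K → ℕ | ∀ k, g k = (σ k : ℕ) + 1})
    have hbi : (⋂ t' ∈ ({t} : Finset (Fin T)), (fun ω => Rt t' (Y ω)) ⁻¹'
          {g : Fin K → ℕ | ∀ k, g k = (σ k : ℕ) + 1})
        = (fun ω => Rt t (Y ω)) ⁻¹' {g : Fin K → ℕ | ∀ k, g k = (σ k : ℕ) + 1} := by
      simp
    rw [hbi, Finset.prod_singleton] at hm
    have hfilter : (@Finset.filter (Equiv.Perm (Fin K))
        (fun σ' => shiftP σ' ∈ {g : Fin K → ℕ | ∀ k, g k = (σ k : ℕ) + 1})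
        (fun a => Classical.propDecidable _) Finset.univ) = {σ} := by
      ext σ'
      simp only [Finset.mem_filter, Finset.mem_univ, true_and, Finset.mem_singleton,
        Set.mem_setOf_eq]
      constructor
      · intro hσ'
        apply shiftP_injective
        funext k
        exact hσ' k
      · rintro rfl
        intro k
        rfl
    rw [hm, hfilter, Finset.card_singleton, Nat.cast_one, one_mul]
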